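/- Let X be a chain, let α be an idempotent orientation-preserving full transformation of X (α ∘ α = α), and let Y be an ideal of α. Then exactly one of the following holds: (1) α is order-preserving on all of X; or (2) Im(α) = α(Y) ⊆ Y, the minimum of Im(α) exists, and α(X\Y) = {min Im(α)}; or (3) Im(α) = α(X\Y) ⊆ X\Y, the maximum of Im(α) exists, and α(Y) = {max Im(α)}. -/
import Mathlib


variable {X : Type*}

/-- The full transformation `f` is order-preserving on the subset `A`. -/
def OrdOn [LinearOrder X] (f : X → X) (A : Set X) : Prop :=
  ∀ ⦃x y : X⦄, x ∈ A → y ∈ A → x ≤ y → f x ≤ f y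

/-- `Y` is an ideal of the full transformation `f`. -/
def IsIdealFull [LinearOrder X] (f : X → X) (Y : Set X) : Prop :=
  Y.Nonempty ∧ OrdOn f Y ∧ OrdOn f Yᶜ ∧
    ∀ ⦃a b : X⦄, a ∈ Y → b ∈ Yᶜ → a ≤ b ∧ f b ≤ f a

/-- `f` is an orientation-preserving full transformation. -/
def IsOPFull [LinearOrder X] (f : X → X) : Prop := ∃ Y : Set X, IsIdealFull f Y

/-- For an idempotent orientation-preserving full transformation `α` with ideal `Y`, one of
the following holds: `α` is order-preserving; or `Im α = α(Y) ⊆ Y`, `Im α` has a minimum `m`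
and `α(X \ Y) = {m}`; or `Im α = α(X \ Y) ⊆ X \ Y`, `Im α` has a maximum `m` and
`α(Y) = {m}`. -/
theorem stmt4 (X : Type*) [LinearOrder X] (α : X → X) (hid : α ∘ α = α)
    (Y : Set X) (hY : IsIdealFull α Y) :
    OrdOn α (Set.univ : Set X) ∨
    (Set.range α = α '' Y ∧ α '' Y ⊆ Y ∧
      ∃ m : X, IsLeast (Set.range α) m ∧ α '' Yᶜ = {m}) ∨
    (Set.range α = α '' Yᶜ ∧ α '' Yᶜ ⊆ Yᶜ ∧
      ∃ m : X, IsGreatest (Set.range α) m ∧ α '' Y = {m}) := by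
  obtain ⟨hYne, hordY, hordYc, hYb⟩ := hY
  have hfix : ∀ x, α (α x) = α x := fun x => congrFun hid x
  by_cases hsub : Set.range α ⊆ Y
  · by_cases hYc : Yᶜ.Nonempty
    · -- case 2
      obtain ⟨b0, hb0⟩ := hYc
      right; left
      have heq : ∀ b ∈ Yᶜ, α b = α b0 := by
        intro b hb
        have h1 : α b ≤ α (α b0) := (hYb (hsub ⟨b0, rfl⟩) hb).2
        have h2 : α b0 ≤ α (α b) := (hYb (hsub ⟨b, rfl⟩) hb0).2
        rw [hfix] at h1 h2
        exact le_antisymm h1 h2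
      set m := α b0 with hm
      have hmin : ∀ x, m ≤ α x := by
        intro x
        by_cases hx : x ∈ Y
        · exact (hYb hx hb0).2
        · exact (heq x hx).ge
      have him : α '' Yᶜ = {m} := by
        ext z
        simp only [Set.mem_image, Set.mem_singleton_iff]
        constructor
        · rintro ⟨b, hb, rfl⟩; exact heq b hb
        · rintro rfl; exact ⟨b0, hb0, rfl⟩
      have hrange : Set.range α = α '' Y := by
        apply subset_antisymm
        · rintro _ ⟨x, rfl⟩
          by_cases hx : x ∈ Y
          · exact ⟨x, hx, rfl⟩
          · rw [heq x hx]
            exact ⟨m, hsub ⟨b0, rfl⟩, hfix b0⟩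
        · exact Set.image_subset_range α Y
      refine ⟨hrange, ?_, m, ⟨⟨b0, rfl⟩, ?_⟩, him⟩
      · rw [← hrange]; exact hsub
      · rintro z ⟨x, rfl⟩; exact hmin x
    · -- Yᶜ empty: order-preserving
      left
      intro x y _ _ hxy
      have hx : x ∈ Y := by by_contra h; exact hYc ⟨x, h⟩
      have hy : y ∈ Y := by by_contra h; exact hYc ⟨y, h⟩
      exact hordY hx hy hxy
  · -- Im α ⊆ Yᶜ
    right; right
    obtain ⟨w, hwr, hwY⟩ := Set.not_subset.mp hsub
    obtain ⟨z, rfl⟩ := hwr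
    have hzY : α z ∈ Yᶜ := hwY
    have hsub' : ∀ x, α x ∈ Yᶜ := by
      intro x
      by_contra h
      have hx : α x ∈ Y := by simpa using h
      obtain ⟨h1, h2⟩ := hYb hx hzY
      rw [hfix, hfix] at h2
      have : α x = α z := le_antisymm h1 h2
      exact hzY (this ▸ hx)
    obtain ⟨a0, ha0⟩ := hYne
    have heq : ∀ a ∈ Y, α a = α a0 := by
      intro a ha
      have h1 : α (α a0) ≤ α a := (hYb ha (hsub' a0)).2
      have h2 : α (α a) ≤ α a0 := (hYb ha0 (hsub' a)).2
      rw [hfix] at h1 h2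
      exact le_antisymm h2 h1
    set M := α a0 with hM
    have hmax : ∀ x, α x ≤ M := by
      intro x
      by_cases hx : x ∈ Y
      · exact (heq x hx).le
      · exact (hYb ha0 hx).2
    have him : α '' Y = {M} := by
      ext u
      simp only [Set.mem_image, Set.mem_singleton_iff]
      constructor
      · rintro ⟨a, ha, rfl⟩; exact heq a ha
      · rintro rfl; exact ⟨a0, ha0, rfl⟩
    have hrange : Set.range α = α '' Yᶜ := by
      apply subset_antisymm
      · rintro _ ⟨x, rfl⟩
        by_cases hx : x ∈ Y
        · rw [heq x hx]
          exact ⟨M, hsub' a0, hfix a0⟩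
        · exact ⟨x, hx, rfl⟩
      · exact Set.image_subset_range α Yᶜ
    refine ⟨hrange, ?_, M, ⟨⟨a0, rfl⟩, ?_⟩, him⟩
    · rw [← hrange]; rintro _ ⟨x, rfl⟩; exact hsub' x
    · rintro u ⟨x, rfl⟩; exact hmax x
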